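/- arXiv:2012.01661 — 4 statements merged into one kernel-verified Lean document; each statement's English description precedes it below -/
import Mathlib

section
/- In an adhesive category, given monomorphisms m₁⁺ : R₁ → G₂ and m₂ : L₂ → G₂, let D with projections x : D → R₁ and y : D → L₂ be their pullback, and let H with injections l₁ : R₁ → H and l₂ : L₂ → H be the pushout of x and y. Then the unique mediating arrow m^H : H → G₂ (obtained from the universal property of the pushout, satisfying m^H ∘ l₁ = m₁⁺ and m^H ∘ l₂ = m₂) is a monomorphism. -/
open CategoryTheory CategoryTheory.Limits

/-- Covering lemma: in an adhesive category, given a pushout of a mono `x`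
and `y` with injections `l₁`, `l₂` (both monos), every map `a : T ⟶ H` into the
pushout is covered by its pullbacks along `l₁` and `l₂`. -/
lemma pushout_factorization_mono_aux {C : Type*} [Category C] [Adhesive C]
    {D R L H : C} (x : D ⟶ R) (y : D ⟶ L) [Mono x]
    (l₁ : R ⟶ H) (l₂ : L ⟶ H) [Mono l₁] [Mono l₂]
    (hpo : IsPushout x y l₁ l₂) {T : C} (a : T ⟶ H) :
    ∃ (T₁ T₂ : C) (t₁ : T₁ ⟶ T) (t₂ : T₂ ⟶ T) (p : T₁ ⟶ R) (q : T₂ ⟶ L),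
      t₁ ≫ a = p ≫ l₁ ∧ t₂ ≫ a = q ≫ l₂ ∧
      ∀ {Q : C} (u v : T ⟶ Q), t₁ ≫ u = t₁ ≫ v → t₂ ≫ u = t₂ ≫ v → u = v := by
  -- pull back `a` along `l₁` and `l₂`
  let T₁ := pullback l₁ a
  let T₂ := pullback l₂ a
  let p : T₁ ⟶ R := pullback.fst l₁ a
  let t₁ : T₁ ⟶ T := pullback.snd l₁ a
  let q : T₂ ⟶ L := pullback.fst l₂ a
  let t₂ : T₂ ⟶ T := pullback.snd l₂ a
  have hX : IsPullback t₁ p a l₁ := (IsPullback.of_hasPullback l₁ a).flip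
  have hY : IsPullback t₂ q a l₂ := (IsPullback.of_hasPullback l₂ a).flip
  -- the corner object
  let W := pullback x p
  let αW : W ⟶ D := pullback.fst x p
  let f' : W ⟶ T₁ := pullback.snd x p
  have hf : IsPullback f' αW p x := (IsPullback.of_hasPullback x p).flip
  have hcomm : (αW ≫ y) ≫ l₂ = (f' ≫ t₁) ≫ a := by
    rw [Category.assoc, ← hpo.w, ← Category.assoc, ← hf.w, Category.assoc, Category.assoc, hX.w]
  let g' : W ⟶ T₂ := pullback.lift (αW ≫ y) (f' ≫ t₁) hcomm
  have hg'q : g' ≫ q = αW ≫ y := pullback.lift_fst _ _ _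
  have hg't : g' ≫ t₂ = f' ≫ t₁ := pullback.lift_snd _ _ _
  have houter : IsPullback (g' ≫ t₂) αW a (y ≫ l₂) := by
    rw [hg't, ← hpo.w]
    exact hf.paste_horiz hX
  have hg : IsPullback g' αW q y :=
    IsPullback.of_right houter (by rw [hg'q]) hY
  have hvk := Adhesive.van_kampen hpo
  have htop : IsPushout f' g' t₁ t₂ :=
    (hvk f' g' t₁ t₂ αW p q a hf hg ⟨hX.w⟩ ⟨hY.w⟩ ⟨hg't.symm⟩).mpr ⟨hX, hY⟩
  exact ⟨T₁, T₂, t₁, t₂, p, q, hX.w, hY.w, fun u v h₁ h₂ => htop.hom_ext h₁ h₂⟩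

/-- In an adhesive category, given monos `m₁⁺ : R₁ ⟶ G₂` and `m₂ : L₂ ⟶ G₂`,
their pullback `D` (legs `x`, `y`), and the pushout `H` of `x` and `y`
(injections `l₁`, `l₂`), the mediating arrow `mH : H ⟶ G₂` with
`l₁ ≫ mH = m₁⁺` and `l₂ ≫ mH = m₂` is a monomorphism. -/
theorem pushout_factorization_mono {C : Type*} [Category C] [Adhesive C]
    {R₁ L₂ G₂ D H : C}
    (m₁p : R₁ ⟶ G₂) (m₂ : L₂ ⟶ G₂) [Mono m₁p] [Mono m₂]
    (x : D ⟶ R₁) (y : D ⟶ L₂) (hpb : IsPullback x y m₁p m₂)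
    (l₁ : R₁ ⟶ H) (l₂ : L₂ ⟶ H) (hpo : IsPushout x y l₁ l₂)
    (mH : H ⟶ G₂) (h₁ : l₁ ≫ mH = m₁p) (h₂ : l₂ ≫ mH = m₂) :
    Mono mH := by
  haveI : Mono x := PullbackCone.mono_fst_of_is_pullback_of_mono hpb.isLimit
  haveI : Mono y := PullbackCone.mono_snd_of_is_pullback_of_mono hpb.isLimit
  haveI : Mono l₂ := Adhesive.mono_of_isPushout_of_mono_left hpo
  haveI : Mono l₁ := Adhesive.mono_of_isPushout_of_mono_right hpo
  constructor
  intro T a b hab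
  obtain ⟨T₁, T₂, t₁, t₂, p, q, ha₁, ha₂, hepi⟩ :=
    pushout_factorization_mono_aux x y l₁ l₂ hpo a
  have ha₁r := reassoc_of% ha₁
  have ha₂r := reassoc_of% ha₂
  have key₁ : t₁ ≫ a = t₁ ≫ b := by
    obtain ⟨S₁, S₂, s₁, s₂, p', q', hb₁, hb₂, hepi'⟩ :=
      pushout_factorization_mono_aux x y l₁ l₂ hpo (t₁ ≫ b)
    have hb₁r := reassoc_of% hb₁
    have hb₂r := reassoc_of% hb₂
    apply hepi'
    · -- both factor through l₁; use that m₁p is mono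
      have hpp : s₁ ≫ p = p' := by
        rw [← cancel_mono m₁p]
        calc (s₁ ≫ p) ≫ m₁p = s₁ ≫ p ≫ l₁ ≫ mH := by rw [h₁, Category.assoc]
          _ = s₁ ≫ t₁ ≫ a ≫ mH := by rw [← ha₁r mH]
          _ = s₁ ≫ t₁ ≫ b ≫ mH := by rw [hab]
          _ = p' ≫ l₁ ≫ mH := hb₁r mH
          _ = p' ≫ m₁p := by rw [h₁]
      calc s₁ ≫ t₁ ≫ a = s₁ ≫ p ≫ l₁ := by rw [ha₁]
        _ = p' ≫ l₁ := by rw [← Category.assoc, hpp]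
        _ = s₁ ≫ t₁ ≫ b := hb₁.symm
    · -- `a` factors through `l₁`, `b` through `l₂`; use the pullback `D`
      have hw : (s₂ ≫ p) ≫ m₁p = q' ≫ m₂ := by
        calc (s₂ ≫ p) ≫ m₁p = s₂ ≫ p ≫ l₁ ≫ mH := by rw [h₁, Category.assoc]
          _ = s₂ ≫ t₁ ≫ a ≫ mH := by rw [← ha₁r mH]
          _ = s₂ ≫ t₁ ≫ b ≫ mH := by rw [hab]
          _ = q' ≫ l₂ ≫ mH := hb₂r mH
          _ = q' ≫ m₂ := by rw [h₂]
      have hr1 : hpb.lift (s₂ ≫ p) q' hw ≫ x = s₂ ≫ p := hpb.lift_fst _ _ _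
      have hr2 : hpb.lift (s₂ ≫ p) q' hw ≫ y = q' := hpb.lift_snd _ _ _
      calc s₂ ≫ t₁ ≫ a = s₂ ≫ p ≫ l₁ := by rw [ha₁]
        _ = (hpb.lift (s₂ ≫ p) q' hw ≫ x) ≫ l₁ := by rw [hr1, Category.assoc]
        _ = (hpb.lift (s₂ ≫ p) q' hw ≫ y) ≫ l₂ := by
              simp only [Category.assoc, hpo.w]
        _ = q' ≫ l₂ := by rw [hr2]
        _ = s₂ ≫ t₁ ≫ b := hb₂.symm
  have key₂ : t₂ ≫ a = t₂ ≫ b := by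
    obtain ⟨S₁, S₂, s₁, s₂, p', q', hb₁, hb₂, hepi'⟩ :=
      pushout_factorization_mono_aux x y l₁ l₂ hpo (t₂ ≫ b)
    have hb₁r := reassoc_of% hb₁
    have hb₂r := reassoc_of% hb₂
    apply hepi'
    · -- `a` factors through `l₂`, `b` through `l₁`; use the pullback `D`
      have hw : p' ≫ m₁p = (s₁ ≫ q) ≫ m₂ := by
        calc p' ≫ m₁p = p' ≫ l₁ ≫ mH := by rw [h₁]
          _ = s₁ ≫ t₂ ≫ b ≫ mH := (hb₁r mH).symm
          _ = s₁ ≫ t₂ ≫ a ≫ mH := by rw [hab]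
          _ = s₁ ≫ q ≫ l₂ ≫ mH := by rw [ha₂r mH]
          _ = (s₁ ≫ q) ≫ m₂ := by rw [h₂, Category.assoc]
      have hr1 : hpb.lift p' (s₁ ≫ q) hw ≫ x = p' := hpb.lift_fst _ _ _
      have hr2 : hpb.lift p' (s₁ ≫ q) hw ≫ y = s₁ ≫ q := hpb.lift_snd _ _ _
      calc s₁ ≫ t₂ ≫ a = s₁ ≫ q ≫ l₂ := by rw [ha₂]
        _ = (hpb.lift p' (s₁ ≫ q) hw ≫ y) ≫ l₂ := by rw [hr2, Category.assoc]
        _ = (hpb.lift p' (s₁ ≫ q) hw ≫ x) ≫ l₁ := by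
              simp only [Category.assoc, hpo.w]
        _ = p' ≫ l₁ := by rw [hr1]
        _ = s₁ ≫ t₂ ≫ b := hb₁.symm
    · -- both factor through l₂; use that m₂ is mono
      have hqq : s₂ ≫ q = q' := by
        rw [← cancel_mono m₂]
        calc (s₂ ≫ q) ≫ m₂ = s₂ ≫ q ≫ l₂ ≫ mH := by rw [h₂, Category.assoc]
          _ = s₂ ≫ t₂ ≫ a ≫ mH := by rw [← ha₂r mH]
          _ = s₂ ≫ t₂ ≫ b ≫ mH := by rw [hab]
          _ = q' ≫ l₂ ≫ mH := hb₂r mH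
          _ = q' ≫ m₂ := by rw [h₂]
      calc s₂ ≫ t₂ ≫ a = s₂ ≫ q ≫ l₂ := by rw [ha₂]
        _ = q' ≫ l₂ := by rw [← Category.assoc, hqq]
        _ = s₂ ≫ t₂ ≫ b := hb₂.symm
  exact hepi a b key₁ key₂
end

section
/- If, for a rule hierarchy over an edge s → t with commuting instances (h ∘ m_s = m_t ∘ λ), the square formed by m_s : L_s → G_s, λ : L_s → L_t, m_t : L_t → G_t, h : G_s → G_t is a pullback, then the rule hierarchy is applicable: there exists a unique arrow h⁻ : G_s⁻ → G_t⁻ between the final pullback complements making the restrictive cube commute. -/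
open CategoryTheory CategoryTheory.Limits

variable {C : Type*} [Category C]

/-- `IsFPBC f g m n` : the square `f : A ⟶ B`, `g : A ⟶ X`, `m : B ⟶ D`,
`n : X ⟶ D` is a *final pullback complement* of `(f, m)`. -/
structure IsFPBC {A B X D : C} (f : A ⟶ B) (g : A ⟶ X) (m : B ⟶ D) (n : X ⟶ D) : Prop where
  isPullback : IsPullback f g m n
  final : ∀ {A' X' : C} (f' : A' ⟶ B) (g' : A' ⟶ X') (n' : X' ⟶ D) (a : A' ⟶ A),
    IsPullback f' g' m n' → f' = a ≫ f →
    ∃! c : X' ⟶ X, c ≫ n = n' ∧ g' ≫ c = a ≫ g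

/-- If the square formed by the instances `m_s`, `λ`, `m_t`, `h` is a pullback,
then the rule hierarchy over the edge `s → t` is applicable: there is a unique
arrow `h⁻ : G_s⁻ ⟶ G_t⁻` between the final pullback complements making the
restrictive cube commute. -/
theorem pullback_instances_applicable
    {Ls Ps Gs Gsm Lt Pt Gt Gtm : C}
    (rsm : Ps ⟶ Ls) (rtm : Pt ⟶ Lt)
    (lam : Ls ⟶ Lt) (pi : Ps ⟶ Pt) (hhom : rsm ≫ lam = pi ≫ rtm)
    (ms : Ls ⟶ Gs) (mt : Lt ⟶ Gt) (h : Gs ⟶ Gt)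
    (hpb : IsPullback ms lam h mt)
    (msm : Ps ⟶ Gsm) (sm : Gsm ⟶ Gs) (hFs : IsFPBC rsm msm ms sm)
    (mtm : Pt ⟶ Gtm) (tm : Gtm ⟶ Gt) (hFt : IsFPBC rtm mtm mt tm) :
    ∃! hm : Gsm ⟶ Gtm, hm ≫ tm = sm ≫ h ∧ msm ≫ hm = pi ≫ mtm := by
  exact hFt.final (rsm ≫ lam) msm (sm ≫ h) pi
    (hFs.isPullback.paste_horiz hpb.flip) hhom
end

section
/- Let r_Δ : L_Δ ← P_Δ → R_Δ be a rule applied reversibly at instance m_Δ : L_Δ → G with result G' and right instance m_Δ⁺ : R_Δ → G'. Let L_Δ → M̂ ← R_Δ be the pushout of r_Δ⁻ : P_Δ → L_Δ and r_Δ⁺ : P_Δ → R_Δ (the canonical merging rules), and let G → Ĝ ← M̂ be the pushout of m_Δ and L_Δ → M̂. Then there exists a unique arrow ĝ⁻ : G' → Ĝ making the cube commute, and the resulting square (R_Δ → M̂, m_Δ⁺, ĝ⁻, M̂ → Ĝ) is a pushout; hence Ĝ is also obtained by applying the merging rule R_Δ → M̂ to G' at instance m_Δ⁺. -/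
open CategoryTheory CategoryTheory.Limits

variable {C : Type*} [Category C]

/-- Canonical version merging: given a reversible SqPO rewrite of `G` by
`r_Δ : L_Δ ← P_Δ → R_Δ` at `m_Δ` with result `G'`, the pushout `M̂` of the two
rule legs (canonical merging rules), and the pushout `Ĝ` of `m_Δ` and
`L_Δ ⟶ M̂`, there is a unique `ĝ⁻ : G' ⟶ Ĝ` making the cube commute, and the
square `(r̂⁻ : R_Δ ⟶ M̂, m_Δ⁺, m̂, ĝ⁻)` is a pushout: `Ĝ` is also obtained by
applying the merging rule `R_Δ ⟶ M̂` to `G'` at `m_Δ⁺`. -/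
theorem canonical_merge
    {LD PD RD G Gm G' Mhat Ghat : C}
    (rdm : PD ⟶ LD) (rdp : PD ⟶ RD)
    (md : LD ⟶ G) (mdm : PD ⟶ Gm) (mdp : RD ⟶ G')
    (gm : Gm ⟶ G) (gp : Gm ⟶ G') [Mono md] [Mono mdm] [Mono mdp]
    (hrestr : IsFPBC rdm mdm md gm) (hrestrPO : IsPushout rdm mdm md gm)
    (hexp : IsPushout rdp mdm mdp gp) (hexpF : IsFPBC rdp mdm mdp gp)
    (rhatp : LD ⟶ Mhat) (rhatm : RD ⟶ Mhat) (hM : IsPushout rdm rdp rhatp rhatm)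
    (ghatp : G ⟶ Ghat) (mhat : Mhat ⟶ Ghat) (hG : IsPushout md rhatp ghatp mhat) :
    ∃ ghatm : G' ⟶ Ghat,
      (gp ≫ ghatm = gm ≫ ghatp ∧ mdp ≫ ghatm = rhatm ≫ mhat) ∧
      IsPushout rhatm mdp mhat ghatm ∧
      ∀ g' : G' ⟶ Ghat,
        (gp ≫ g' = gm ≫ ghatp ∧ mdp ≫ g' = rhatm ≫ mhat) → g' = ghatm := by
  have hcomm : rdp ≫ rhatm ≫ mhat = mdm ≫ gm ≫ ghatp := by
    rw [← Category.assoc, ← hM.w, Category.assoc, ← hG.w, ← Category.assoc, hrestrPO.w,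
      Category.assoc]
  refine ⟨hexp.desc (rhatm ≫ mhat) (gm ≫ ghatp) hcomm,
    ⟨hexp.inr_desc _ _ _, hexp.inl_desc _ _ _⟩, ?_, ?_⟩
  · -- pasting/cancellation: the big square is a pushout, hexp is a pushout,
    -- hence the right face is a pushout.
    have hbig : IsPushout (rdm ≫ rhatp) mdm mhat (gm ≫ ghatp) :=
      hrestrPO.paste_horiz hG.flip
    rw [hM.w, ← hexp.inr_desc (rhatm ≫ mhat) (gm ≫ ghatp) hcomm] at hbig
    exact hbig.of_left (hexp.inl_desc _ _ _).symm hexp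
  · rintro g' ⟨h1, h2⟩
    exact hexp.hom_ext (by rw [h2, hexp.inl_desc]) (by rw [h1, hexp.inr_desc])
end

section
/- Pasting of final pullback complements: given composable arrows g : A' → A, f : A → B and a monomorphism m : B → D, the final pullback complement of (f ∘ g, m) can be obtained by first taking the final pullback complement (C, n) of (f, m) and then the final pullback complement of (g, the induced mono A → C); the pasted square is again a final pullback complement. -/
open CategoryTheory CategoryTheory.Limits

variable {C : Type*} [Category C]

/-- Pasting of final pullback complements: given `g : A' ⟶ A`, `f : A ⟶ B` and
a mono `m : B ⟶ D`, if `(k : A ⟶ X, n : X ⟶ D)` is the final pullback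
complement of `(f, m)` with `k` a mono, and `(l : A' ⟶ Q, p : Q ⟶ X)` is the
final pullback complement of `(g, k)`, then the pasted square
`(l, p ≫ n)` is the final pullback complement of `(f ∘ g, m)`. -/
theorem fpbc_pasting
    {A' A B X Q D : C} (g : A' ⟶ A) (f : A ⟶ B) (m : B ⟶ D) [Mono m]
    (k : A ⟶ X) (n : X ⟶ D) [Mono k] (h₁ : IsFPBC f k m n)
    (l : A' ⟶ Q) (p : Q ⟶ X) (h₂ : IsFPBC g l k p) :
    IsFPBC (g ≫ f) l m (p ≫ n) := by
  constructor
  · exact h₂.isPullback.paste_horiz h₁.isPullback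
  · intro A'' X' f' g' n' a hpb hfac
    obtain ⟨c₁, ⟨hc₁n, hc₁g⟩, hc₁uniq⟩ :=
      h₁.final f' g' n' (a ≫ g) hpb (by rw [hfac, Category.assoc])
    -- the square (a ≫ g, g', k, c₁) is a pullback
    have hsq : IsPullback (a ≫ g) g' k c₁ := by
      apply IsPullback.of_right _ _ h₁.isPullback
      · rw [hc₁n]
        convert hpb using 2
        rw [hfac, Category.assoc]
      · rw [hc₁g, Category.assoc]
    obtain ⟨c, ⟨hcp, hcl⟩, hcuniq⟩ := h₂.final (a ≫ g) g' c₁ a hsq rfl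
    refine ⟨c, ⟨by rw [← Category.assoc, hcp, hc₁n], hcl⟩, ?_⟩
    rintro c' ⟨hc'n, hc'l⟩
    have : c' ≫ p = c₁ := by
      apply hc₁uniq
      constructor
      · rw [Category.assoc, hc'n]
      · rw [← Category.assoc, hc'l, Category.assoc, Category.assoc, h₂.isPullback.w]
    exact hcuniq c' ⟨this, hc'l⟩
end
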